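/- If X is a topological space containing S^α as a subspace (α an infinite cardinal), then there exists a continuous retraction f : X → S^α, i.e., a continuous map restricting to the identity on S^α. -/

import Mathlib

open Filter Topology

universe u

/-- The two points of the Sierpiński space. -/
inductive SPt : Type
  | zero
  | one
deriving DecidableEq

/-- The Sierpiński topology: `{zero}` is open, `{one}` is not. -/
instance : TopologicalSpace SPt := TopologicalSpace.generateFrom {{SPt.zero}}

/-- `A` is closed under limits of `o`-indexed transfinite sequences for all infinite
ordinals `o ≤ β` (β an infinite cardinal, viewed as an ordinal). -/
def OrdSeqClosed {X : Type u} [TopologicalSpace X] (β : Cardinal.{u}) (A : Set X) : Prop :=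
  ∀ o : Ordinal.{u}, Ordinal.omega0 ≤ o → o ≤ β.ord →
    ∀ f : o.ToType → X, (∀ i, f i ∈ A) →
    ∀ x : X, Filter.Tendsto f Filter.atTop (nhds x) → x ∈ A

/-- A space is β-sequential if every such subset is closed. -/
def IsBetaSequential (X : Type u) [TopologicalSpace X] (β : Cardinal.{u}) : Prop :=
  ∀ A : Set X, OrdSeqClosed β A → IsClosed A

/-- `A` contains limits of all convergent transfinite sequences of its points. -/
def TransSeqClosed {X : Type u} [TopologicalSpace X] (A : Set X) : Prop :=
  ∀ o : Ordinal.{u}, Ordinal.omega0 ≤ o →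
    ∀ f : o.ToType → X, (∀ i, f i ∈ A) →
    ∀ x : X, Filter.Tendsto f Filter.atTop (nhds x) → x ∈ A

/-- Pseudoradial space. -/
def IsPseudoradial (X : Type u) [TopologicalSpace X] : Prop :=
  ∀ A : Set X, TransSeqClosed A → IsClosed A

/-! Maps into the Sierpiński space are exactly indicators of open sets. Each coordinate set
`{s | s i = zero}` is open in the power, so through the embedding it is the trace of an open set
`V i` of `X`; the map `x ↦ (indicator of V i at x)ᵢ` is then continuous and fixes the copy of the
power. -/

namespace SPt

theorem isOpen_singleton_zero : IsOpen ({zero} : Set SPt) :=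
  TopologicalSpace.isOpen_generateFrom_of_mem rfl

theorem eq_of_eq_zero_iff {a b : SPt} (h : a = zero ↔ b = zero) : a = b := by
  cases a <;> cases b <;> simp_all

variable {X : Type*}

theorem continuous_iff [TopologicalSpace X] {f : X → SPt} :
    Continuous f ↔ IsOpen (f ⁻¹' {zero}) := by
  rw [continuous_generateFrom_iff]
  simp only [Set.mem_singleton_iff, forall_eq]

open Classical in
noncomputable def ofMem (V : Set X) (x : X) : SPt := if x ∈ V then zero else one

theorem ofMem_eq_zero_iff {V : Set X} {x : X} : ofMem V x = zero ↔ x ∈ V := by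
  by_cases hx : x ∈ V <;> simp [ofMem, hx]

theorem preimage_ofMem_zero (V : Set X) : ofMem V ⁻¹' {zero} = V :=
  Set.ext fun _ => ofMem_eq_zero_iff

theorem continuous_ofMem [TopologicalSpace X] {V : Set X} (hV : IsOpen V) :
    Continuous (ofMem V) :=
  continuous_iff.2 <| (preimage_ofMem_zero V).symm ▸ hV

theorem exists_continuous_retraction_of_isInducing [TopologicalSpace X] {ι : Type*}
    {e : (ι → SPt) → X} (he : IsInducing e) :
    ∃ f : X → (ι → SPt), Continuous f ∧ ∀ s, f (e s) = s := by
  have coord_open :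
      ∀ i, ∃ V : Set X, IsOpen V ∧ e ⁻¹' V = (fun s : ι → SPt => s i) ⁻¹' {zero} :=
    fun i => he.isOpen_iff.1 (isOpen_singleton_zero.preimage (continuous_apply i))
  choose V hV_open hV_trace using coord_open
  refine ⟨fun x i => ofMem (V i) x, continuous_pi fun i => continuous_ofMem (hV_open i),
    fun s => funext fun i => eq_of_eq_zero_iff ?_⟩
  rw [ofMem_eq_zero_iff, ← Set.mem_preimage, hV_trace i]
  rfl

end SPt

theorem retraction_onto_sierpinski_power_general (α : Cardinal.{u})
    (X : Type u) [TopologicalSpace X] (e : (α.ord.ToType → SPt) → X)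
    (he : Topology.IsEmbedding e) :
    ∃ f : X → (α.ord.ToType → SPt), Continuous f ∧ ∀ s, f (e s) = s :=
  SPt.exists_continuous_retraction_of_isInducing he.isInducing

/-- If `X` contains `S^α` as a subspace, then there is a continuous
retraction of `X` onto `S^α`. -/
theorem retraction_onto_sierpinski_power (α : Cardinal.{u}) (hα : Cardinal.aleph0 ≤ α)
    (X : Type u) [TopologicalSpace X] (e : (α.ord.ToType → SPt) → X)
    (he : Topology.IsEmbedding e) :
    ∃ f : X → (α.ord.ToType → SPt), Continuous f ∧ ∀ s, f (e s) = s :=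
  retraction_onto_sierpinski_power_general α X e he
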